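/- A degenerate point of the offset family is not in the closure of the interior: if p ∈ ∂P_t and there exist δ > 0 such that for all ε > 0, P_{t+ε} contains no point within distance δ of p, and if P is convex, then no such degenerate point exists for t strictly less than the vanishing time t* = max { s : P_s ≠ ∅ }. -/

import Mathlib

/-!
On a closed convex set `P`, the distance to the frontier is concave: if the closed balls of
radii `r` and `s` around `p` and `q` lie in `P`, so does the ball of radius `(1 - λ) r + λ s`
around `(1 - λ) p + λ q`. Given `p ∈ P_t` and a point `q ∈ P_{t*}` with `t < t*`, every point of
the open segment from `p` to `q` is therefore strictly deeper than `t`, and these points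
accumulate at `p`, so no ball around `p` can avoid all the `P_{t+ε}`.
-/

open Metric Set

theorem IsPreconnected.subset_interior_of_disjoint_frontier {X : Type*} [TopologicalSpace X]
    {s P : Set X} (hs : IsPreconnected s) (hsP : (s ∩ P).Nonempty)
    (hsF : Disjoint s (frontier P)) : s ⊆ interior P := by
  have hcover : s ⊆ interior P ∪ (closure P)ᶜ := fun x hx => by
    by_cases hxP : x ∈ closure P
    · exact .inl (by_contra fun h => hsF.ne_of_mem hx ⟨hxP, h⟩ rfl)
    · exact .inr hxP
  obtain ⟨x, hxs, hxP⟩ := hsP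
  exact hs.subset_left_of_subset_union isOpen_interior isClosed_closure.isOpen_compl
    (disjoint_compl_right.mono_left interior_subset_closure) hcover
    ⟨x, hxs, (hcover hxs).resolve_right (not_not_intro (subset_closure hxP))⟩

theorem le_infDist_frontier_of_ball_subset {X : Type*} [PseudoMetricSpace X] {P : Set X}
    {x : X} {r : ℝ} (hF : (frontier P).Nonempty) (h : ball x r ⊆ P) :
    r ≤ infDist x (frontier P) :=
  (le_infDist hF).2 fun _ hz =>
    not_lt.1 fun hlt => hz.2 (interior_maximal h isOpen_ball (mem_ball'.2 hlt))

section NormedSpace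

variable {E : Type*} [NormedAddCommGroup E] [NormedSpace ℝ E] {P : Set E}

theorem ball_infDist_frontier_subset_interior {x : E} (hx : x ∈ P) :
    ball x (infDist x (frontier P)) ⊆ interior P := by
  rcases (ball x (infDist x (frontier P))).eq_empty_or_nonempty with h | h
  · exact h ▸ empty_subset _
  · exact isPreconnected_ball.subset_interior_of_disjoint_frontier
      ⟨x, mem_ball_self (nonempty_ball.1 h), hx⟩
      (subset_compl_iff_disjoint_right.1 ball_infDist_subset_compl)

theorem IsClosed.closedBall_subset_of_le_infDist_frontier (hP : IsClosed P) {x : E}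
    (hx : x ∈ P) {r : ℝ} (hr : r ≤ infDist x (frontier P)) : closedBall x r ⊆ P := by
  rcases (infDist_nonneg (x := x) (s := frontier P)).eq_or_lt with h0 | hpos
  · calc closedBall x r ⊆ closedBall x 0 := closedBall_subset_closedBall (h0 ▸ hr)
      _ ⊆ P := by rwa [closedBall_zero, singleton_subset_iff]
  · calc closedBall x r ⊆ closedBall x (infDist x (frontier P)) := closedBall_subset_closedBall hr
      _ = closure (ball x (infDist x (frontier P))) := (closure_ball x hpos.ne').symm
      _ ⊆ P := closure_minimal
        ((ball_infDist_frontier_subset_interior hx).trans interior_subset) hP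

theorem Convex.closedBall_combo_subset (hP : Convex ℝ P) {p q : E} {r s a b : ℝ}
    (hr : 0 ≤ r) (hs : 0 ≤ s) (hp : closedBall p r ⊆ P) (hq : closedBall q s ⊆ P)
    (ha : 0 ≤ a) (hb : 0 ≤ b) (hab : a + b = 1) :
    closedBall (a • p + b • q) (a * r + b * s) ⊆ P := by
  intro y hy
  set m := a * r + b * s
  set v := y - (a • p + b • q)
  have hv : ‖v‖ ≤ m := by rwa [mem_closedBall, dist_eq_norm] at hy
  -- Translate both balls by the same rescaled copy of `v`; junk division by `m = 0` is harmless.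
  have hshift : ∀ {x : E} {ρ : ℝ}, 0 ≤ ρ → x + (ρ / m) • v ∈ closedBall x ρ := by
    intro x ρ hρ
    rw [mem_closedBall, dist_eq_norm, add_sub_cancel_left, norm_smul,
      Real.norm_of_nonneg (div_nonneg hρ ((norm_nonneg v).trans hv)), div_mul_eq_mul_div,
      mul_div_assoc]
    exact mul_le_of_le_one_right hρ (div_le_one_of_le₀ hv ((norm_nonneg v).trans hv))
  have hmv : (m / m) • v = v := by
    rcases eq_or_ne m 0 with hm | hm
    · rw [norm_le_zero_iff.1 (hv.trans_eq hm), smul_zero]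
    · rw [div_self hm, one_smul]
  have hy_eq : a • (p + (r / m) • v) + b • (q + (s / m) • v) = y := by
    calc _ = a • p + b • q + (m / m) • v := by simp only [m]; module
      _ = y := by rw [hmv, add_sub_cancel]
  exact hy_eq ▸ hP (hp (hshift hr)) (hq (hshift hs)) ha hb hab

theorem Convex.concaveOn_infDist_frontier (hP : Convex ℝ P) (hPc : IsClosed P)
    (hF : (frontier P).Nonempty) : ConcaveOn ℝ P (infDist · (frontier P)) :=
  ⟨hP, fun _ hp _ hq _ _ ha hb hab => le_infDist_frontier_of_ball_subset hF <|
    ball_subset_closedBall.trans <| hP.closedBall_combo_subset infDist_nonneg infDist_nonneg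
      (hPc.closedBall_subset_of_le_infDist_frontier hp le_rfl)
      (hPc.closedBall_subset_of_le_infDist_frontier hq le_rfl) ha hb hab⟩

end NormedSpace

theorem ConcaveOn.mem_closure_setOf_lt {E : Type*} [AddCommGroup E] [Module ℝ E]
    [TopologicalSpace E] [ContinuousAdd E] [ContinuousSMul ℝ E] {s : Set E} {f : E → ℝ}
    (hf : ConcaveOn ℝ s f) {p q : E} (hp : p ∈ s) (hq : q ∈ s) {t : ℝ} (htp : t ≤ f p)
    (htq : t < f q) : p ∈ closure {x ∈ s | t < f x} := by
  refine closure_mono ?_ (segment_subset_closure_openSegment (left_mem_segment ℝ p q))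
  rintro _ ⟨a, b, ha, hb, hab, rfl⟩
  refine ⟨hf.1 hp hq ha.le hb.le hab, ?_⟩
  calc t = a * t + b * t := by rw [← add_mul, hab, one_mul]
    _ < a * f p + b * f q := add_lt_add_of_le_of_lt
        (mul_le_mul_of_nonneg_left htp ha.le) (mul_lt_mul_of_pos_left htq hb)
    _ ≤ f (a • p + b • q) := hf.2 hp hq ha.le hb.le hab

theorem stmt16_general (P : Set (Fin 3 → ℝ)) (hPc : IsCompact P) (hPconv : Convex ℝ P)
    (Pt : ℝ → Set (Fin 3 → ℝ))
    (hPt : ∀ t, Pt t = {x ∈ P | t ≤ Metric.infDist x (frontier P)})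
    (tstar : ℝ) (htstar : IsGreatest {s : ℝ | (Pt s).Nonempty} tstar)
    (t : ℝ) (hlt : t < tstar) :
    ¬ ∃ p, p ∈ frontier (Pt t) ∧
        ∃ δ > 0, ∀ ε > 0, Pt (t + ε) ∩ Metric.ball p δ = ∅ := by
  rintro ⟨p, hp, δ, hδ, hmiss⟩
  have hPt_closed : IsClosed (Pt t) := hPt t ▸
    hPc.isClosed.inter (isClosed_le continuous_const (continuous_infDist_pt _))
  obtain ⟨hpP, hpt⟩ : p ∈ P ∧ t ≤ infDist p (frontier P) := by
    simpa [hPt] using hPt_closed.frontier_subset hp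
  obtain ⟨q, hqP, hqt⟩ : ∃ q ∈ P, tstar ≤ infDist q (frontier P) := by
    simpa [hPt, Set.Nonempty] using htstar.1
  have hF : (frontier P).Nonempty := nonempty_frontier_iff.2 ⟨⟨q, hqP⟩, hPc.ne_univ⟩
  have hp_closure : p ∈ closure {x ∈ P | t < infDist x (frontier P)} :=
    (hPconv.concaveOn_infDist_frontier hPc.isClosed hF).mem_closure_setOf_lt hpP hqP hpt
      (hlt.trans_le hqt)
  obtain ⟨c, ⟨hcP, hct⟩, hpc⟩ := Metric.mem_closure_iff.1 hp_closure δ hδ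
  have hc : c ∈ Pt (t + (infDist c (frontier P) - t)) := by
    rw [hPt, add_sub_cancel]
    exact ⟨hcP, le_rfl⟩
  exact (hmiss _ (sub_pos.2 hct)).subset ⟨hc, mem_ball'.2 hpc⟩

/-- Let `P ⊆ ℝ³` be compact, convex, with nonempty interior, and let
`P_t = {x ∈ P : d(x, ∂P) ≥ t}` (distance in the fixed ambient norm). A degenerate
point of `P_t` is `p ∈ ∂P_t` such that for some `δ > 0`, every `P_{t+ε}` (`ε > 0`)
misses the ball `B(p, δ)`. Claim: for convex `P` and `0 ≤ t < t*`, where `t*` is the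
vanishing time (the greatest `s` with `P_s ≠ ∅`), `P_t` has no degenerate points. -/
theorem stmt16 (P : Set (Fin 3 → ℝ)) (hPc : IsCompact P) (hPconv : Convex ℝ P)
    (hPint : (interior P).Nonempty)
    (Pt : ℝ → Set (Fin 3 → ℝ))
    (hPt : ∀ t, Pt t = {x ∈ P | t ≤ Metric.infDist x (frontier P)})
    (tstar : ℝ) (htstar : IsGreatest {s : ℝ | (Pt s).Nonempty} tstar)
    (t : ℝ) (ht : 0 ≤ t) (hlt : t < tstar) :
    ¬ ∃ p, p ∈ frontier (Pt t) ∧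
        ∃ δ > 0, ∀ ε > 0, Pt (t + ε) ∩ Metric.ball p δ = ∅ :=
  stmt16_general P hPc hPconv Pt hPt tstar htstar t hlt
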